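/- Fix integers k ≥ 1, n ≥ 0 and weights w : ℕ → ℝ (indexed from 1). Then the sum over all (h_1, …, h_k) ∈ B_n of ∏_{j=1}^k f_{θ^{2j−2}(w)}(h_j) equals the sum over all closed walks (v_0, …, v_{2n}) of length 2n in G starting and ending at the origin of ∏_{i=1}^{2n} w'({v_{i−1}, v_i}), where w'({u,v}) = ∏_{j=1}^k w(max(u_j, v_j) + 2j − 2). -/
import Mathlib


/-- Dyck-path height functions of length `2n` starting at height `0`. -/
def DyckF (n : ℕ) : Set (Fin (2 * n + 1) → ℕ) :=
  {h | h 0 = 0 ∧ h (Fin.last (2 * n)) = 0 ∧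
    ∀ i : Fin (2 * n), h i.succ = h i.castSucc + 1 ∨ h i.castSucc = h i.succ + 1}

/-- `B_n`: `k`-tuples of Dyck-path height functions of length `2n` that are
pointwise ordered: `h_j(i) ≤ h_{j'}(i)` whenever `j ≤ j'`. -/
def Bset (k n : ℕ) : Set (Fin k → Fin (2 * n + 1) → ℕ) :=
  {H | (∀ j : Fin k, H j ∈ DyckF n) ∧
    ∀ j j' : Fin k, j ≤ j' → ∀ i : Fin (2 * n + 1), H j i ≤ H j' i}

/-- The vertex set of the graph `G`: tuples `x ∈ ℕ^k` with weakly increasing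
coordinates all of the same parity. -/
def Vset (k : ℕ) : Set (Fin k → ℕ) :=
  {x | (∀ i j : Fin k, i ≤ j → x i ≤ x j) ∧ ∀ i j : Fin k, x i % 2 = x j % 2}

/-- Adjacency in the graph `G`: every coordinate differs by exactly `1`. -/
def GAdj (k : ℕ) (u v : Fin k → ℕ) : Prop :=
  ∀ j : Fin k, u j = v j + 1 ∨ v j = u j + 1

/-- `C_n`: closed walks of length `2n` in `G` starting and ending at the origin. -/
def Cset (k n : ℕ) : Set (Fin (2 * n + 1) → Fin k → ℕ) :=
  {f | (∀ i : Fin (2 * n + 1), f i ∈ Vset k) ∧ f 0 = 0 ∧ f (Fin.last (2 * n)) = 0 ∧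
    ∀ i : Fin (2 * n), GAdj k (f i.castSucc) (f i.succ)}

/-- The weighted sum over `B_n` of `∏_j f_{θ^{2j-2}(w)}(h_j)` (here `j : Fin k` is
zero-indexed, so the shift is `2j`) equals -/
lemma dyck_parity {n : ℕ} {h : Fin (2 * n + 1) → ℕ} (hh : h ∈ DyckF n) :
    ∀ i : Fin (2 * n + 1), h i % 2 = (i : ℕ) % 2 := by
  obtain ⟨h0, -, hstep⟩ := hh
  intro i
  induction i using Fin.induction with
  | zero => simp [h0]
  | succ i ih =>
    have h1 : (i.succ : ℕ) = (i.castSucc : ℕ) + 1 := by simp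
    rcases hstep i with hs | hs <;> omega

/-- (continued) equals the weighted sum over closed walks in
`C_n` of `∏_i w'({v_{i-1}, v_i})`, where
`w'({u,v}) = ∏_j w (max (u_j) (v_j) + 2j)`. -/
theorem stmt9 (k n : ℕ) (hk : 1 ≤ k) (w : ℕ → ℝ) :
    (∑ᶠ H ∈ Bset k n, ∏ j : Fin k, ∏ i : Fin (2 * n),
        w (max (H j i.castSucc) (H j i.succ) + 2 * (j : ℕ)))
      = ∑ᶠ f ∈ Cset k n, ∏ i : Fin (2 * n), ∏ j : Fin k,
          w (max (f i.castSucc j) (f i.succ j) + 2 * (j : ℕ)) := by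
  have hbij : Set.BijOn
      (fun (H : Fin k → Fin (2 * n + 1) → ℕ) (i : Fin (2 * n + 1)) (j : Fin k) => H j i)
      (Bset k n) (Cset k n) := by
    refine ⟨?_, ?_, ?_⟩
    · intro H hH
      obtain ⟨hd, hord⟩ := hH
      refine ⟨?_, ?_, ?_, ?_⟩
      · intro i
        refine ⟨fun j j' hjj' => hord j j' hjj' i, fun j j' => ?_⟩
        rw [dyck_parity (hd j) i, dyck_parity (hd j') i]
      · funext j; exact (hd j).1
      · funext j; exact (hd j).2.1
      · intro i j
        rcases (hd j).2.2 i with hs | hs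
        · right; exact hs
        · left; exact hs
    · intro H _ H' _ hHH'
      funext j i
      exact congrFun (congrFun hHH' i) j
    · intro f hf
      obtain ⟨hv, h0, hl, hadj⟩ := hf
      refine ⟨fun j i => f i j, ⟨?_, ?_⟩, ?_⟩
      · intro j
        refine ⟨congrFun h0 j, congrFun hl j, fun i => ?_⟩
        rcases hadj i j with hs | hs
        · right; exact hs
        · left; exact hs
      · intro j j' hjj' i
        exact (hv i).1 j j' hjj'
      · rfl
  refine finsum_mem_eq_of_bijOn _ hbij ?_
  intro H _
  exact Finset.prod_comm
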